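/- arXiv:1111.1610 — 2 statements merged into one kernel-verified Lean document; each statement's English description precedes it below -/
import Mathlib

section
/- Let G be a finite abelian group and α ∈ O(G ⊕ Ĝ). The map ψ_α: L_α × L_α → k^× defined by ψ_α((α₁(g,χ), g), (α₁(h,ξ), h)) = ⟨α₂(g,χ)^{-1}, α₁(h,ξ)⟩·⟨χ, h⟩ is well defined and is a 2-cocycle on the group L_α with values in k^× (with trivial action). -/
/-!
STATEMENT 12: For α ∈ O(G ⊕ Ĝ), the map
ψ_α((α₁(g,χ), g), (α₁(h,ξ), h)) = ⟨α₂(g,χ)⁻¹, α₁(h,ξ)⟩·⟨χ, h⟩ is well defined and a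
2-cocycle on L_α with values in kˣ.
-/

private lemma aux_cancel {M : Type*} [CommGroup M] {X W X' W' C D : M}
    (h1 : X * C = W * D) (h2 : X' * C = W' * D) : X⁻¹ * W = X'⁻¹ * W' := by
  have hX : X = W * D * C⁻¹ := by rw [← h1]; group
  have hX' : X' = W' * D * C⁻¹ := by rw [← h2]; group
  rw [hX, hX']; group

private lemma aux_cocycle {M : Type*} [CommGroup M] (a b c d e f : M) :
    a⁻¹ * b * ((c * d)⁻¹ * (e * f)) = d⁻¹ * f * ((a * c)⁻¹ * (b * e)) := by
  simp [mul_inv, mul_comm, mul_left_comm, mul_assoc]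

theorem psi_alpha_well_defined_cocycle
    (k : Type) [Field k] [IsAlgClosed k] [CharZero k]
    (G : Type) [CommGroup G] [Fintype G]
    (α : (G × (G →* kˣ)) ≃* (G × (G →* kˣ)))
    (hα : ∀ (g : G) (χ : G →* kˣ), (α (g, χ)).2 ((α (g, χ)).1) = χ g)
    (f : (G × (G →* kˣ)) → (G × (G →* kˣ)) → kˣ)
    (hf : ∀ x y : G × (G →* kˣ), f x y = ((α x).2 ((α y).1))⁻¹ * x.2 y.1) :
    (∀ x x' y y' : G × (G →* kˣ),
      ((α x).1, x.1) = ((α x').1, x'.1) → ((α y).1, y.1) = ((α y').1, y'.1) →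
      f x y = f x' y') ∧
    (∀ x y z : G × (G →* kˣ),
      f x y * f (x * y) z = f y z * f x (y * z)) := by
  have hα' : ∀ u : G × (G →* kˣ), (α u).2 ((α u).1) = u.2 u.1 := fun u => hα u.1 u.2
  -- α preserves the symmetric pairing
  have key : ∀ u v : G × (G →* kˣ),
      (α u).2 ((α v).1) * (α v).2 ((α u).1) = u.2 v.1 * v.2 u.1 := by
    intro u v
    have h := hα' (u * v)
    rw [map_mul] at h
    simp only [Prod.snd_mul, Prod.fst_mul, MonoidHom.mul_apply, map_mul, hα'] at h
    have e : (α u).2 ((α v).1) * ((α v).2 ((α u).1)) =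
        (u.2 u.1)⁻¹ * (u.2 u.1 * (α v).2 ((α u).1) *
          ((α u).2 ((α v).1) * v.2 v.1)) * (v.2 v.1)⁻¹ := by
      rw [mul_comm ((α u).2 ((α v).1)) ((α v).2 ((α u).1))]; group
    rw [e, h, mul_comm (u.2 v.1) (v.2 u.1)]; group
  constructor
  · intro x x' y y' hx hy
    injection hx with ex1 ex2
    injection hy with ey1 ey2
    have h1 := key x y'
    have h2 := key x' y'
    rw [← ex1, ← ex2] at h2
    rw [hf, hf, ey1, ey2]
    exact aux_cancel h1 h2
  · intro x y z
    simp only [hf, map_mul, Prod.fst_mul, Prod.snd_mul, MonoidHom.mul_apply]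
    exact aux_cocycle _ _ _ _ _ _
end

section
/- Let H be a Hopf algebra and K, S left H-comodule algebras. For a finite-dimensional left H-module X and P ∈ _K^H M_S, equip X ⊗ S with left S-action s·(x ⊗ t) = s₍₋₁₎·x ⊗ s₍₀₎t. Then for a quasi-triangular structure R on H, the maps m_{X,Y,P}: P ⊗_S ((X ⊗ Y) ⊗ S) → (P ⊗_S (Y ⊗ S)) ⊗_S (X ⊗ S), m(p ⊗ (x ⊗ y) ⊗ s) = (p ⊗ R^{-1}·y ⊗ 1) ⊗ (R^{-2}·x ⊗ s), are well defined over the tensor product over S; i.e., m(p·l ⊗ (x⊗y) ⊗ s) = m(p ⊗ l₍₋₁₎·(x⊗y) ⊗ l₍₀₎s) for all l ∈ S. -/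
/-!
STATEMENT 17: For a quasi-triangular (H,R), a left H-comodule algebra S, H-modules X, Y and
a right S-module P, the map m(p ⊗ (x⊗y) ⊗ s) = (p ⊗ R⁻¹·y ⊗ 1) ⊗ (R⁻²·x ⊗ s) is balanced
over S : m(p·l ⊗ (x⊗y) ⊗ s) = m(p ⊗ l₍₋₁₎·(x⊗y) ⊗ l₍₀₎s) modulo the balancing submodule
defining the tensor products over S.
-/

open TensorProduct

noncomputable section
set_option linter.unusedSectionVars false
set_option maxHeartbeats 1000000
set_option synthInstance.maxHeartbeats 400000

variable (k : Type) [Field k] (H : Type) [Ring H] [HopfAlgebra k H]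

/-- The action of `H` on an `H`-module `X`, as a linear map `H ⊗ X → X`. -/
def hact (X : Type) [AddCommGroup X] [Module k X] [Module H X]
    [IsScalarTower k H X] [SMulCommClass H k X] [SMulCommClass k H X] :
    H ⊗[k] X →ₗ[k] X :=
  TensorProduct.lift ((Algebra.lsmul k k X : H →ₐ[k] Module.End k X).toLinearMap)

/-- The diagonal action of `H` on `X ⊗ Y` via the comultiplication. -/
def dact (X Y : Type) [AddCommGroup X] [Module k X] [Module H X]
    [IsScalarTower k H X] [SMulCommClass H k X] [SMulCommClass k H X]
    [AddCommGroup Y] [Module k Y] [Module H Y]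
    [IsScalarTower k H Y] [SMulCommClass H k Y] [SMulCommClass k H Y] :
    H ⊗[k] (X ⊗[k] Y) →ₗ[k] X ⊗[k] Y :=
  (TensorProduct.map (hact k H X) (hact k H Y)) ∘ₗ
    (TensorProduct.tensorTensorTensorComm k H H X Y).toLinearMap ∘ₗ
    (LinearMap.rTensor (X ⊗[k] Y) (Coalgebra.comul (R := k)))

variable (S : Type) [Ring S] [Algebra k S] (lamS : S →ₗ[k] H ⊗[k] S)

/-- The twisted left `S`-action on `V ⊗ S` for an `H`-module `V`,
`s · (v ⊗ t) = s₍₋₁₎ · v ⊗ s₍₀₎ t`, given the action `H ⊗ V → V`. -/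
def twistAct (V : Type) [AddCommGroup V] [Module k V]
    (act : H ⊗[k] V →ₗ[k] V) (s : S) : V ⊗[k] S →ₗ[k] V ⊗[k] S :=
  (TensorProduct.map act (LinearMap.mul' k S)) ∘ₗ
    (TensorProduct.tensorTensorTensorComm k H S V S).toLinearMap ∘ₗ
    (TensorProduct.mk k (H ⊗[k] S) (V ⊗[k] S) (lamS s))

variable (P : Type) [AddCommGroup P] [Module k P]
  [Module Sᵐᵒᵖ P] [IsScalarTower k Sᵐᵒᵖ P] [SMulCommClass Sᵐᵒᵖ k P] [SMulCommClass k Sᵐᵒᵖ P]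

variable (X Y : Type) [AddCommGroup X] [Module k X] [Module H X]
  [IsScalarTower k H X] [SMulCommClass H k X] [SMulCommClass k H X]
  [AddCommGroup Y] [Module k Y] [Module H Y]
  [IsScalarTower k H Y] [SMulCommClass H k Y] [SMulCommClass k H Y]

/-- The map `m : P ⊗ ((X ⊗ Y) ⊗ S) → (P ⊗ (Y ⊗ S)) ⊗ (X ⊗ S)`,
`p ⊗ (x ⊗ y) ⊗ s ↦ (p ⊗ R⁻¹·y ⊗ 1) ⊗ (R⁻²·x ⊗ s)`. -/
def mAssoc (Rinv : H ⊗[k] H) :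
    P ⊗[k] ((X ⊗[k] Y) ⊗[k] S) →ₗ[k] (P ⊗[k] (Y ⊗[k] S)) ⊗[k] (X ⊗[k] S) :=
  (TensorProduct.map
    -- H ⊗ (P ⊗ Y) → P ⊗ (Y ⊗ S), r ⊗ (p ⊗ y) ↦ p ⊗ (r·y ⊗ 1)
    ((LinearMap.lTensor P ((TensorProduct.mk k Y S).flip (1 : S))) ∘ₗ
      (TensorProduct.comm k Y P).toLinearMap ∘ₗ
      (TensorProduct.map (hact k H Y) (LinearMap.id (M := P))) ∘ₗ
      (TensorProduct.assoc k H Y P).symm.toLinearMap ∘ₗ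
      (LinearMap.lTensor H (TensorProduct.comm k P Y).toLinearMap))
    -- H ⊗ (X ⊗ S) → X ⊗ S, r ⊗ (x ⊗ s) ↦ r·x ⊗ s
    ((TensorProduct.map (hact k H X) (LinearMap.id (M := S))) ∘ₗ
      (TensorProduct.assoc k H X S).symm.toLinearMap)) ∘ₗ
  (TensorProduct.tensorTensorTensorComm k H H (P ⊗[k] Y) (X ⊗[k] S)).toLinearMap ∘ₗ
  (TensorProduct.mk k (H ⊗[k] H) ((P ⊗[k] Y) ⊗[k] (X ⊗[k] S)) Rinv) ∘ₗ
  (TensorProduct.assoc k P Y (X ⊗[k] S)).symm.toLinearMap ∘ₗ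
  (LinearMap.lTensor P (TensorProduct.assoc k Y X S).toLinearMap) ∘ₗ
  (LinearMap.lTensor P (LinearMap.rTensor S (TensorProduct.comm k X Y).toLinearMap))


section Aux

lemma hact_tmul (V : Type) [AddCommGroup V] [Module k V] [Module H V]
    [IsScalarTower k H V] [SMulCommClass H k V] [SMulCommClass k H V] (h : H) (v : V) :
    hact k H V (h ⊗ₜ v) = h • v := by
  simp [hact]

def actOn (V : Type) [AddCommGroup V] [Module k V] [Module H V]
    [IsScalarTower k H V] [SMulCommClass H k V] [SMulCommClass k H V] (v : V) : H →ₗ[k] V :=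
  hact k H V ∘ₗ (TensorProduct.mk k H V).flip v

@[simp] lemma actOn_apply (V : Type) [AddCommGroup V] [Module k V] [Module H V]
    [IsScalarTower k H V] [SMulCommClass H k V] [SMulCommClass k H V] (v : V) (h : H) :
    actOn k H V v h = h • v := by
  simp [actOn, hact_tmul]

end Aux

def auxM (p' : P) (x : X) (y : Y) (s : S) :
    H ⊗[k] H →ₗ[k] (P ⊗[k] (Y ⊗[k] S)) ⊗[k] (X ⊗[k] S) :=
  TensorProduct.map
    (TensorProduct.mk k P (Y ⊗[k] S) p' ∘ₗ (TensorProduct.mk k Y S).flip 1 ∘ₗ actOn k H Y y)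
    ((TensorProduct.mk k X S).flip s ∘ₗ actOn k H X x)

@[simp] lemma auxM_tmul (p' : P) (x : X) (y : Y) (s : S) (r₁ r₂ : H) :
    auxM k H S P X Y p' x y s (r₁ ⊗ₜ r₂) =
      (p' ⊗ₜ ((r₁ • y) ⊗ₜ (1 : S))) ⊗ₜ ((r₂ • x) ⊗ₜ s) := by
  simp [auxM]

def auxD (p' : P) (x : X) (y : Y) (s : S) :
    (H ⊗[k] H) ⊗[k] S →ₗ[k] (P ⊗[k] (Y ⊗[k] S)) ⊗[k] (X ⊗[k] S) :=
  (TensorProduct.map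
    (TensorProduct.mk k P (Y ⊗[k] S) p' ∘ₗ (TensorProduct.mk k Y S).flip 1 ∘ₗ actOn k H Y y)
    (TensorProduct.map (actOn k H X x) (LinearMap.mulRight k s))) ∘ₗ
  (TensorProduct.assoc k H H S).toLinearMap

@[simp] lemma auxD_tmul (p' : P) (x : X) (y : Y) (s : S) (u v : H) (d : S) :
    auxD k H S P X Y p' x y s ((u ⊗ₜ v) ⊗ₜ d) =
      (p' ⊗ₜ ((u • y) ⊗ₜ (1 : S))) ⊗ₜ ((v • x) ⊗ₜ (d * s)) := by
  simp [auxD]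

def auxB (p' : P) (x : X) (y : Y) (s : S) :
    (H ⊗[k] S) ⊗[k] (H ⊗[k] H) →ₗ[k] (P ⊗[k] (Y ⊗[k] S)) ⊗[k] (X ⊗[k] S) :=
  (TensorProduct.map (TensorProduct.mk k P (Y ⊗[k] S) p')
      ((TensorProduct.mk k X S).flip s ∘ₗ actOn k H X x)) ∘ₗ
  (TensorProduct.assoc k Y S H).symm.toLinearMap ∘ₗ
  (TensorProduct.map (actOn k H Y y ∘ₗ LinearMap.mul' k H) LinearMap.id) ∘ₗ
  (TensorProduct.tensorTensorTensorComm k H S H H).toLinearMap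

@[simp] lemma auxB_tmul (p' : P) (x : X) (y : Y) (s : S) (a : H) (b : S) (r₁ r₂ : H) :
    auxB k H S P X Y p' x y s ((a ⊗ₜ b) ⊗ₜ (r₁ ⊗ₜ r₂)) =
      (p' ⊗ₜ (((a * r₁) • y) ⊗ₜ b)) ⊗ₜ ((r₂ • x) ⊗ₜ s) := by
  simp [auxB]

def auxE (p' : P) (x : X) (y : Y) (s : S) :
    (H ⊗[k] (H ⊗[k] S)) ⊗[k] (H ⊗[k] H) →ₗ[k] (P ⊗[k] (Y ⊗[k] S)) ⊗[k] (X ⊗[k] S) :=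
  auxD k H S P X Y p' x y s ∘ₗ
  (LinearMap.rTensor S (LinearMap.mul' k (H ⊗[k] H))) ∘ₗ
  (TensorProduct.assoc k (H ⊗[k] H) (H ⊗[k] H) S).symm.toLinearMap ∘ₗ
  (LinearMap.lTensor (H ⊗[k] H) (TensorProduct.comm k S (H ⊗[k] H)).toLinearMap) ∘ₗ
  (TensorProduct.assoc k (H ⊗[k] H) S (H ⊗[k] H)).toLinearMap ∘ₗ
  (LinearMap.rTensor (H ⊗[k] H) (TensorProduct.assoc k H H S).symm.toLinearMap)

lemma auxE_tmul (p' : P) (x : X) (y : Y) (s : S) (a c : H) (d : S) (ρ : H ⊗[k] H) :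
    auxE k H S P X Y p' x y s ((a ⊗ₜ (c ⊗ₜ d)) ⊗ₜ ρ) =
      auxD k H S P X Y p' x y s (((a ⊗ₜ c) * ρ) ⊗ₜ d) := by
  simp [auxE, LinearMap.mul'_apply]

@[simp] lemma auxE_tmul' (p' : P) (x : X) (y : Y) (s : S) (a c : H) (d : S) (r₁ r₂ : H) :
    auxE k H S P X Y p' x y s ((a ⊗ₜ (c ⊗ₜ d)) ⊗ₜ (r₁ ⊗ₜ r₂)) =
      (p' ⊗ₜ (((a * r₁) • y) ⊗ₜ (1 : S))) ⊗ₜ (((c * r₂) • x) ⊗ₜ (d * s)) := by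
  rw [auxE_tmul]
  simp [Algebra.TensorProduct.tmul_mul_tmul]

lemma mAssoc_tmul (Rv : H ⊗[k] H) (p' : P) (x : X) (y : Y) (s : S) :
    mAssoc k H S P X Y Rv (p' ⊗ₜ ((x ⊗ₜ y) ⊗ₜ s)) = auxM k H S P X Y p' x y s Rv := by
  have base : ∀ Rv : H ⊗[k] H, mAssoc k H S P X Y Rv (p' ⊗ₜ ((x ⊗ₜ y) ⊗ₜ s)) =
      (TensorProduct.map
        ((LinearMap.lTensor P ((TensorProduct.mk k Y S).flip (1 : S))) ∘ₗ
          (TensorProduct.comm k Y P).toLinearMap ∘ₗ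
          (TensorProduct.map (hact k H Y) (LinearMap.id (M := P))) ∘ₗ
          (TensorProduct.assoc k H Y P).symm.toLinearMap ∘ₗ
          (LinearMap.lTensor H (TensorProduct.comm k P Y).toLinearMap))
        ((TensorProduct.map (hact k H X) (LinearMap.id (M := S))) ∘ₗ
          (TensorProduct.assoc k H X S).symm.toLinearMap)
        ((TensorProduct.tensorTensorTensorComm k H H (P ⊗[k] Y) (X ⊗[k] S))
          (Rv ⊗ₜ ((p' ⊗ₜ y) ⊗ₜ (x ⊗ₜ s))))) := by
    intro Rv
    simp [mAssoc]
  rw [base]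
  induction Rv using TensorProduct.induction_on with
  | zero => simp
  | tmul r₁ r₂ => simp [hact_tmul]
  | add a b ha hb => rw [add_tmul, map_add, map_add, ha, hb, map_add]

lemma twistAct_apply (V : Type) [AddCommGroup V] [Module k V]
    (act : H ⊗[k] V →ₗ[k] V) (s : S) (w : V ⊗[k] S) :
    twistAct k H S lamS V act s w =
      TensorProduct.map act (LinearMap.mul' k S)
        ((TensorProduct.tensorTensorTensorComm k H S V S) (lamS s ⊗ₜ w)) := by
  simp [twistAct]

lemma step2 (N : Submodule k ((P ⊗[k] (Y ⊗[k] S)) ⊗[k] (X ⊗[k] S)))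
    (hgen_inner : ∀ (p : P) (s' : S) (w : Y ⊗[k] S) (v : X ⊗[k] S),
      ((MulOpposite.op s' • p) ⊗ₜ w) ⊗ₜ v
        - (p ⊗ₜ (twistAct k H S lamS Y (hact k H Y) s' w)) ⊗ₜ v ∈ N)
    (l : S) (p' : P) (x : X) (y : Y) (s : S) :
    ∀ Rv : H ⊗[k] H,
      auxM k H S P X Y (MulOpposite.op l • p') x y s Rv
        - auxB k H S P X Y p' x y s (lamS l ⊗ₜ Rv) ∈ N := by
  intro Rv
  induction Rv using TensorProduct.induction_on with
  | zero => simp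
  | add a b ha hb =>
      rw [map_add, tmul_add, map_add]
      convert N.add_mem ha hb using 1
      abel
  | tmul r₁ r₂ =>
      have key : auxB k H S P X Y p' x y s (lamS l ⊗ₜ (r₁ ⊗ₜ r₂)) =
          (p' ⊗ₜ (twistAct k H S lamS Y (hact k H Y) l ((r₁ • y) ⊗ₜ (1 : S))))
            ⊗ₜ ((r₂ • x) ⊗ₜ s) := by
        rw [twistAct_apply]
        induction lamS l using TensorProduct.induction_on with
        | zero => simp
        | tmul a b => simp [hact_tmul, smul_smul, LinearMap.mul'_apply]
        | add u v hu hv =>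
            rw [add_tmul, map_add, hu, hv]
            simp only [add_tmul, map_add, tmul_add]
      rw [auxM_tmul, key]
      exact hgen_inner p' l ((r₁ • y) ⊗ₜ 1) ((r₂ • x) ⊗ₜ s)

lemma step3 (N : Submodule k ((P ⊗[k] (Y ⊗[k] S)) ⊗[k] (X ⊗[k] S)))
    (hgen_outer : ∀ (u : P ⊗[k] (Y ⊗[k] S)) (s' : S) (v : X ⊗[k] S),
      ((LinearMap.lTensor P (LinearMap.lTensor Y ((LinearMap.mul k S).flip s'))) u) ⊗ₜ v
        - u ⊗ₜ (twistAct k H S lamS X (hact k H X) s' v) ∈ N)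
    (p' : P) (x : X) (y : Y) (s : S) :
    ∀ (ζ : H ⊗[k] S) (ρ : H ⊗[k] H),
      auxB k H S P X Y p' x y s (ζ ⊗ₜ ρ)
        - auxE k H S P X Y p' x y s ((LinearMap.lTensor H lamS ζ) ⊗ₜ ρ) ∈ N := by
  intro ζ ρ
  induction ζ using TensorProduct.induction_on with
  | zero => simp
  | add u v hu hv =>
      rw [add_tmul, map_add, map_add, add_tmul, map_add]
      convert N.add_mem hu hv using 1
      abel
  | tmul a b =>
      induction ρ using TensorProduct.induction_on with
      | zero => simp
      | add ρ₁ ρ₂ h₁ h₂ =>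
          rw [tmul_add, map_add, tmul_add, map_add]
          convert N.add_mem h₁ h₂ using 1
          abel
      | tmul r₁ r₂ =>
          have key1 : auxB k H S P X Y p' x y s ((a ⊗ₜ b) ⊗ₜ (r₁ ⊗ₜ r₂)) =
              ((LinearMap.lTensor P (LinearMap.lTensor Y ((LinearMap.mul k S).flip b)))
                (p' ⊗ₜ (((a * r₁) • y) ⊗ₜ (1 : S)))) ⊗ₜ ((r₂ • x) ⊗ₜ s) := by
            simp [LinearMap.mul_apply']
          have key2 : auxE k H S P X Y p' x y s
                ((LinearMap.lTensor H lamS (a ⊗ₜ b)) ⊗ₜ (r₁ ⊗ₜ r₂)) =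
              (p' ⊗ₜ (((a * r₁) • y) ⊗ₜ (1 : S)))
                ⊗ₜ (twistAct k H S lamS X (hact k H X) b ((r₂ • x) ⊗ₜ s)) := by
            rw [LinearMap.lTensor_tmul, twistAct_apply]
            induction lamS b using TensorProduct.induction_on with
            | zero => simp
            | tmul c d => simp [hact_tmul, smul_smul, LinearMap.mul'_apply]
            | add u v hu hv =>
                rw [tmul_add, add_tmul, map_add, hu, hv]
                simp only [add_tmul, map_add, tmul_add]
          rw [key1, key2]
          exact hgen_outer (p' ⊗ₜ (((a * r₁) • y) ⊗ₜ (1 : S))) b ((r₂ • x) ⊗ₜ s)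

lemma step4 (p' : P) (x : X) (y : Y) (s : S) :
    ∀ (W : (H ⊗[k] H) ⊗[k] S) (ρ : H ⊗[k] H),
      auxE k H S P X Y p' x y s (((TensorProduct.assoc k H H S) W) ⊗ₜ ρ) =
        auxD k H S P X Y p' x y s ((LinearMap.rTensor S (LinearMap.mulRight k ρ)) W) := by
  intro W ρ
  induction W using TensorProduct.induction_on with
  | zero => simp
  | add u v hu hv =>
      rw [map_add, add_tmul, map_add, hu, hv, map_add, map_add]
  | tmul q d =>
      induction q using TensorProduct.induction_on with
      | zero => simp
      | add q₁ q₂ h₁ h₂ =>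
          rw [add_tmul, map_add, add_tmul, map_add, h₁, h₂]
          simp only [map_add]
      | tmul a c =>
          rw [TensorProduct.assoc_tmul, auxE_tmul, LinearMap.rTensor_tmul,
            LinearMap.mulRight_apply]

lemma step5 (p' : P) (x : X) (y : Y) (s : S) :
    ∀ (ζ : H ⊗[k] S) (ρ : H ⊗[k] H),
      mAssoc k H S P X Y ρ (p' ⊗ₜ (TensorProduct.map (dact k H X Y) (LinearMap.mul' k S)
          ((TensorProduct.tensorTensorTensorComm k H S (X ⊗[k] Y) S)
            (ζ ⊗ₜ ((x ⊗ₜ y) ⊗ₜ s))))) =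
        auxD k H S P X Y p' x y s
          ((LinearMap.rTensor S (LinearMap.mulLeft k ρ ∘ₗ
              (TensorProduct.comm k H H).toLinearMap ∘ₗ (Coalgebra.comul (R := k)))) ζ) := by
  intro ζ ρ
  induction ζ using TensorProduct.induction_on with
  | zero => simp
  | add u v hu hv =>
      rw [add_tmul, map_add, map_add, tmul_add, map_add, hu, hv]
      simp only [map_add]
  | tmul a b =>
      rw [TensorProduct.tensorTensorTensorComm_tmul, TensorProduct.map_tmul,
        LinearMap.rTensor_tmul]
      simp only [LinearMap.mul'_apply, LinearMap.comp_apply, LinearEquiv.coe_coe,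
        LinearMap.mulLeft_apply]
      show mAssoc k H S P X Y ρ (p' ⊗ₜ ((TensorProduct.map (hact k H X) (hact k H Y)
          ((TensorProduct.tensorTensorTensorComm k H H X Y)
            ((Coalgebra.comul (R := k) a) ⊗ₜ (x ⊗ₜ y)))) ⊗ₜ (b * s))) =
        auxD k H S P X Y p' x y s
          ((ρ * (TensorProduct.comm k H H (Coalgebra.comul (R := k) a))) ⊗ₜ b)
      induction (Coalgebra.comul (R := k) a) using TensorProduct.induction_on with
      | zero => simp
      | add u v hu hv =>
          rw [add_tmul, map_add, map_add, add_tmul, tmul_add, map_add, hu, hv,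
            map_add, mul_add, add_tmul, map_add]
      | tmul a₁ a₂ =>
          rw [TensorProduct.tensorTensorTensorComm_tmul, TensorProduct.map_tmul,
            hact_tmul, hact_tmul, mAssoc_tmul, TensorProduct.comm_tmul]
          induction ρ using TensorProduct.induction_on with
          | zero => simp
          | add ρ₁ ρ₂ h₁ h₂ =>
              rw [map_add, h₁, h₂, add_mul, add_tmul, map_add]
          | tmul r₁ r₂ =>
              rw [auxM_tmul, Algebra.TensorProduct.tmul_mul_tmul, auxD_tmul,
                smul_smul, smul_smul]

lemma step6 (R Rinv : H ⊗[k] H) (hRinv : R * Rinv = 1) (hRinv' : Rinv * R = 1)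
    (hR3 : ∀ h : H, R * Coalgebra.comul (R := k) h =
      (TensorProduct.comm k H H) (Coalgebra.comul (R := k) h) * R) :
    (LinearMap.mulRight k Rinv) ∘ₗ (Coalgebra.comul (R := k)) =
      (LinearMap.mulLeft k Rinv) ∘ₗ (TensorProduct.comm k H H).toLinearMap ∘ₗ
        (Coalgebra.comul (R := k)) := by
  ext a
  simp only [LinearMap.comp_apply, LinearMap.mulRight_apply, LinearMap.mulLeft_apply,
    LinearEquiv.coe_coe]
  calc Coalgebra.comul (R := k) a * Rinv
      = Rinv * R * Coalgebra.comul (R := k) a * Rinv := by rw [hRinv', one_mul]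
    _ = Rinv * (R * Coalgebra.comul (R := k) a) * Rinv := by rw [mul_assoc Rinv]
    _ = Rinv * ((TensorProduct.comm k H H) (Coalgebra.comul (R := k) a) * R) * Rinv := by
        rw [hR3]
    _ = Rinv * (TensorProduct.comm k H H) (Coalgebra.comul (R := k) a) * (R * Rinv) := by
        rw [← mul_assoc, mul_assoc _ R Rinv]
    _ = Rinv * (TensorProduct.comm k H H) (Coalgebra.comul (R := k) a) := by
        rw [hRinv, mul_one]
theorem mAssoc_balanced_over_S
    (R Rinv : H ⊗[k] H) (hRinv : R * Rinv = 1) (hRinv' : Rinv * R = 1)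
    -- R Δ(h) = Δᶜᵒᵖ(h) R
    (hR3 : ∀ h : H, R * Coalgebra.comul (R := k) h =
      (TensorProduct.comm k H H) (Coalgebra.comul (R := k) h) * R)
    -- lamS is a left H-comodule algebra structure
    (hcoassocS : (LinearMap.lTensor H lamS) ∘ₗ lamS =
      (TensorProduct.assoc k H H S).toLinearMap ∘ₗ
        (LinearMap.rTensor S (Coalgebra.comul (R := k))) ∘ₗ lamS)
    (hcounitS : (TensorProduct.lid k S).toLinearMap ∘ₗ
        (LinearMap.rTensor S (Coalgebra.counit (R := k))) ∘ₗ lamS = LinearMap.id)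
    (hmulS : ∀ a b : S, lamS (a * b) = lamS a * lamS b) (honeS : lamS 1 = 1)
    -- N is the balancing submodule for the two tensor products over S in the target
    (N : Submodule k ((P ⊗[k] (Y ⊗[k] S)) ⊗[k] (X ⊗[k] S)))
    (hN : N = Submodule.span k {t : (P ⊗[k] (Y ⊗[k] S)) ⊗[k] (X ⊗[k] S) |
      -- outer balancing : (u·s) ⊗ v - u ⊗ (s·v)
      (∃ (u : P ⊗[k] (Y ⊗[k] S)) (s : S) (v : X ⊗[k] S),
        ((LinearMap.lTensor P (LinearMap.lTensor Y ((LinearMap.mul k S).flip s))) u) ⊗ₜ v =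
          t + u ⊗ₜ (twistAct k H S lamS X (hact k H X) s v)) ∨
      -- inner balancing : ((p·s) ⊗ w) ⊗ v - (p ⊗ (s·w)) ⊗ v
      (∃ (p : P) (s : S) (w : Y ⊗[k] S) (v : X ⊗[k] S),
        ((MulOpposite.op s • p) ⊗ₜ w) ⊗ₜ v =
          t + (p ⊗ₜ (twistAct k H S lamS Y (hact k H Y) s w)) ⊗ₜ v)}) :
    -- m(p·l ⊗ (x⊗y) ⊗ s) = m(p ⊗ l₍₋₁₎·(x⊗y) ⊗ l₍₀₎s) modulo N :
    ∀ (l : S) (w : P ⊗[k] ((X ⊗[k] Y) ⊗[k] S)),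
      ∃ n ∈ N,
        (mAssoc k H S P X Y Rinv)
            ((LinearMap.rTensor ((X ⊗[k] Y) ⊗[k] S)
              (DistribMulAction.toLinearMap k P (MulOpposite.op l))) w) =
          (mAssoc k H S P X Y Rinv)
            ((LinearMap.lTensor P
              (twistAct k H S lamS (X ⊗[k] Y) (dact k H X Y) l)) w) + n := by
  intro l w
  have hgen_inner : ∀ (p : P) (s' : S) (wY : Y ⊗[k] S) (v : X ⊗[k] S),
      ((MulOpposite.op s' • p) ⊗ₜ wY) ⊗ₜ v
        - (p ⊗ₜ (twistAct k H S lamS Y (hact k H Y) s' wY)) ⊗ₜ v ∈ N := by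
    intro p s' wY v
    rw [hN]
    exact Submodule.subset_span (Or.inr ⟨p, s', wY, v, by abel⟩)
  have hgen_outer : ∀ (u : P ⊗[k] (Y ⊗[k] S)) (s' : S) (v : X ⊗[k] S),
      ((LinearMap.lTensor P (LinearMap.lTensor Y ((LinearMap.mul k S).flip s'))) u) ⊗ₜ v
        - u ⊗ₜ (twistAct k H S lamS X (hact k H X) s' v) ∈ N := by
    intro u s' v
    rw [hN]
    exact Submodule.subset_span (Or.inl ⟨u, s', v, by abel⟩)
  suffices hmem : (mAssoc k H S P X Y Rinv)
        ((LinearMap.rTensor ((X ⊗[k] Y) ⊗[k] S)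
          (DistribMulAction.toLinearMap k P (MulOpposite.op l))) w) -
      (mAssoc k H S P X Y Rinv)
        ((LinearMap.lTensor P (twistAct k H S lamS (X ⊗[k] Y) (dact k H X Y) l)) w) ∈ N by
    exact ⟨_, hmem, by abel⟩
  induction w using TensorProduct.induction_on with
  | zero => simp
  | add w₁ w₂ h₁ h₂ =>
      rw [map_add, map_add, map_add, map_add]
      convert N.add_mem h₁ h₂ using 1
      abel
  | tmul p' t =>
      induction t using TensorProduct.induction_on with
      | zero => simp
      | add t₁ t₂ h₁ h₂ =>
          rw [tmul_add, map_add, map_add, map_add, map_add]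
          convert N.add_mem h₁ h₂ using 1
          abel
      | tmul xy s =>
          induction xy using TensorProduct.induction_on with
          | zero => simp
          | add u v hu hv =>
              rw [add_tmul, tmul_add, map_add, map_add, map_add, map_add]
              convert N.add_mem hu hv using 1
              abel
          | tmul x y =>
              rw [LinearMap.rTensor_tmul, LinearMap.lTensor_tmul,
                DistribMulAction.toLinearMap, DistribSMul.toLinearMap_apply, twistAct_apply, mAssoc_tmul,
                step5 k H S P X Y p' x y s (lamS l) Rinv,
                ← step6 k H R Rinv hRinv hRinv' hR3,
                LinearMap.rTensor_comp, LinearMap.comp_apply,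
                ← step4 k H S P X Y p' x y s
                  ((LinearMap.rTensor S (Coalgebra.comul (R := k))) (lamS l)) Rinv]
              have hc : LinearMap.lTensor H lamS (lamS l) =
                  (TensorProduct.assoc k H H S)
                    ((LinearMap.rTensor S (Coalgebra.comul (R := k))) (lamS l)) := by
                have h := LinearMap.congr_fun hcoassocS l
                simpa using h
              rw [← hc]
              have h2 := step2 k H S lamS P X Y N hgen_inner l p' x y s Rinv
              have h3 := step3 k H S lamS P X Y N hgen_outer p' x y s (lamS l) Rinv
              convert N.add_mem h2 h3 using 1
              abel
end
end
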